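/- arXiv:2109.07507 — 2 statements merged into one kernel-verified Lean document; each statement's English description precedes it below -/
import Mathlib

section
/- Let p ∈ ℂ[z₁,z₂] be pure stable with p(0,0) = 0 and order of vanishing M at (0,0). Then the lowest order homogeneous term of p has the form P_M(z₁,z₂) = c·∏_{j=1}^{M}(z₂ + a_j z₁) where c ∈ ℂ ∖ {0} and each a_j is a strictly positive real number. In particular P_M has no factors of z₁ or of z₂. -/
/-!
Rescaling `p (t ^ a * u, t ^ b * x)` and letting `t → 0⁺`, Hurwitz's theorem shows that the lowest
part `P` of a stable `p` for the weights `(a, b)` cannot vanish at a point `(u, v)` of `ℍ²` unless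
`P (u, ·) = 0`. Evaluating at `(λ ^ a, λ ^ b * x)` with `|λ| = 1` then shows that, when `a ≤ b`,
a nonzero root `x` of `P (1, ·)` forces `a = b` and `x < 0`.

Purity rules out the factors `z₁` and `z₂`. If `z₁ ^ M` did not occur in `P_M`, the Newton polygon
of `p` would have an edge through the lowest pure power of `z₁` with slope `b / a > 1`, and the
polynomial of that edge would have a nonzero root. Hence `z₁ ^ M` occurs, and by symmetry so does
`z₂ ^ M`. So `P_M (1, ·)` has degree `M`, and for `a = b = 1` all its roots are negative reals
`-a_j`.
-/

open Filter Topology Finsupp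
open scoped Polynomial

theorem Multiset.exists_fin_map_univ_eq {α : Type*} (s : Multiset α) {n : ℕ}
    (hn : Multiset.card s = n) : ∃ r : Fin n → α, Finset.univ.val.map r = s := by
  subst hn
  obtain ⟨l, rfl⟩ := Quot.exists_rep s
  exact ⟨fun j => l[j.1]'(by simpa using j.2), by
    rw [Fin.univ_val_map]
    exact congrArg _ List.ofFn_getElem⟩

namespace Polynomial

theorem exists_isRoot_ne_zero {K : Type*} [Field K] [IsAlgClosed K] {q : K[X]} {k : ℕ}
    (h0 : q.coeff 0 ≠ 0) (hk : q.coeff k ≠ 0) (hk0 : 0 < k) : ∃ x, x ≠ 0 ∧ q.IsRoot x := by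
  obtain ⟨x, hx⟩ := IsAlgClosed.exists_root q
    (natDegree_pos_iff_degree_pos.1 (hk0.trans_le (le_natDegree_of_ne_zero hk))).ne'
  refine ⟨x, fun hx0 => h0 ?_, hx⟩
  subst hx0
  rwa [coeff_zero_eq_eval_zero]

section Normed

variable {K : Type*} [NormedField K] [IsAlgClosed K]

theorem norm_eval_eq_mul_prod_roots (q : K[X]) (z : K) :
    ‖q.eval z‖ = ‖q.leadingCoeff‖ * (q.roots.map fun x => ‖z - x‖).prod := by
  conv_lhs =>
    rw [← C_leadingCoeff_mul_prod_multiset_X_sub_C (IsAlgClosed.card_roots_eq_natDegree (p := q))]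
  rw [eval_mul, eval_C, eval_multiset_prod, norm_mul, Multiset.map_map]
  congr 1
  exact (map_multiset_prod (normHom (α := K)) _).trans (by simp)

theorem norm_eval_le_of_forall_roots (q : K[X]) {v z : K} {ρ : ℝ} (hρ : 0 < ρ)
    (hroots : ∀ x ∈ q.roots, ρ ≤ ‖v - x‖) :
    ‖q.eval z‖ ≤ (1 + ‖z - v‖ / ρ) ^ q.natDegree * ‖q.eval v‖ := by
  set b := 1 + ‖z - v‖ / ρ
  have hfactor : ∀ x ∈ q.roots, ‖z - x‖ ≤ b * ‖v - x‖ := fun x hx => by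
    have hzv : ‖z - v‖ ≤ ‖z - v‖ / ρ * ‖v - x‖ := by
      rw [div_mul_eq_mul_div, le_div_iff₀ hρ]
      exact mul_le_mul_of_nonneg_left (hroots x hx) (norm_nonneg _)
    calc ‖z - x‖ ≤ ‖z - v‖ + ‖v - x‖ := norm_sub_le_norm_sub_add_norm_sub z v x
      _ ≤ b * ‖v - x‖ := by simp only [b]; linarith
  rw [norm_eval_eq_mul_prod_roots, norm_eval_eq_mul_prod_roots,
    ← IsAlgClosed.card_roots_eq_natDegree, mul_left_comm, ← Multiset.prod_replicate,
    ← Multiset.map_const', ← Multiset.prod_map_mul]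
  gcongr
  exact Multiset.prod_map_le_prod_map₀ _ _ (fun _ _ => norm_nonneg _) hfactor

/-- A polynomial version of Hurwitz's theorem. -/
theorem limit_eq_zero_of_roots_far {ι : Type*} {l : Filter ι} [l.NeBot] {G : ι → K[X]}
    {D : ℕ} (hdeg : ∀ i, (G i).natDegree ≤ D) {F : K → K}
    (hF : ∀ z, Tendsto (fun i => (G i).eval z) l (𝓝 (F z))) {v : K} {ρ : ℝ} (hρ : 0 < ρ)
    (hroots : ∀ᶠ i in l, ∀ x ∈ (G i).roots, ρ ≤ ‖v - x‖) (hv : F v = 0) (z : K) :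
    F z = 0 := by
  have hb : 1 ≤ 1 + ‖z - v‖ / ρ := le_add_of_nonneg_right (by positivity)
  have hle : ‖F z‖ ≤ (1 + ‖z - v‖ / ρ) ^ D * ‖F v‖ := by
    refine le_of_tendsto_of_tendsto (hF z).norm (((hF v).norm).const_mul _) ?_
    filter_upwards [hroots] with i hi
    calc ‖(G i).eval z‖ ≤ (1 + ‖z - v‖ / ρ) ^ (G i).natDegree * ‖(G i).eval v‖ :=
          norm_eval_le_of_forall_roots _ hρ hi
      _ ≤ (1 + ‖z - v‖ / ρ) ^ D * ‖(G i).eval v‖ := by gcongr; exact hdeg i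
  simpa [hv] using hle

end Normed

theorem exists_eq_C_mul_prod_X_add_C (q : ℂ[X]) {M : ℕ} (hM : q.natDegree = M)
    (hroots : ∀ x ∈ q.roots, x.re < 0 ∧ x.im = 0) :
    ∃ a : Fin M → ℝ, (∀ j, 0 < a j) ∧ q = C q.leadingCoeff * ∏ j, (X + C ((a j : ℝ) : ℂ)) := by
  obtain ⟨r, hr⟩ := q.roots.exists_fin_map_univ_eq (IsAlgClosed.card_roots_eq_natDegree.trans hM)
  have hneg : ∀ j, (r j).re < 0 ∧ (r j).im = 0 := fun j =>
    hroots _ (hr ▸ Multiset.mem_map_of_mem _ (Finset.mem_univ_val j))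
  refine ⟨fun j => -(r j).re, fun j => neg_pos.2 (hneg j).1, ?_⟩
  conv_lhs => rw [← C_leadingCoeff_mul_prod_multiset_X_sub_C
    (IsAlgClosed.card_roots_eq_natDegree (p := q)), ← hr, Multiset.map_map,
    ← Finset.prod_eq_multiset_prod]
  refine congrArg _ (Finset.prod_congr rfl fun j _ => ?_)
  rw [Function.comp_apply, sub_eq_add_neg, ← C_neg]
  congr 2
  exact Complex.ext (by simp) (by simp [(hneg j).2])

end Polynomial

open Real in
theorem Real.exists_sin_mul_add_pos {s a : ℝ} (hs : 1 ≤ s) (ha : -π < a) (ha' : a ≤ π)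
    (h : ¬(s = 1 ∧ a = π)) : ∃ θ ∈ Set.Ioo 0 π, 0 < sin (s * θ + a) := by
  have hs0 : 0 < s := one_pos.trans_le hs
  have hsπ : π ≤ s * π := le_mul_of_one_le_left pi_pos.le hs
  suffices ∃ x, a < x ∧ x < a + s * π ∧ 0 < sin x by
    obtain ⟨x, hax, hxa, hx⟩ := this
    refine ⟨(x - a) / s, ⟨div_pos (by linarith) hs0, (div_lt_iff₀ hs0).2 (by linarith)⟩, ?_⟩
    rwa [mul_div_cancel₀ _ hs0.ne', sub_add_cancel]
  rcases ha'.lt_or_eq with ha' | rfl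
  · have h1 : max a 0 < min π (a + π) :=
      max_lt (lt_min ha' (by linarith)) (lt_min pi_pos (by linarith))
    have h2 := le_max_left a 0
    have h3 := le_max_right a 0
    have h4 := min_le_left π (a + π)
    have h5 := min_le_right π (a + π)
    exact ⟨(max a 0 + min π (a + π)) / 2, by linarith, by linarith,
      sin_pos_of_pos_of_lt_pi (by linarith) (by linarith)⟩
  · have hs1 : 1 < s := hs.lt_of_ne fun h' => h ⟨h'.symm, rfl⟩
    have h1 : 2 * π < min (3 * π) (π + s * π) :=
      lt_min (by linarith [pi_pos]) (by nlinarith [pi_pos])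
    have h2 := min_le_left (3 * π) (π + s * π)
    have h3 := min_le_right (3 * π) (π + s * π)
    refine ⟨(2 * π + min (3 * π) (π + s * π)) / 2, by linarith, by linarith, ?_⟩
    rw [← sin_sub_two_pi]
    exact sin_pos_of_pos_of_lt_pi (by linarith) (by linarith)

theorem Complex.im_exp_mul_I_mul (t : ℝ) (x : ℂ) :
    (Complex.exp (t * Complex.I) * x).im = ‖x‖ * Real.sin (t + x.arg) := by
  conv_lhs => rw [← Complex.norm_mul_exp_arg_mul_I x]
  rw [mul_left_comm, ← Complex.exp_add, ← add_mul, ← Complex.ofReal_add, Complex.im_ofReal_mul,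
    Complex.exp_ofReal_mul_I_im]

theorem Finsupp.degree_fin_two (d : Fin 2 →₀ ℕ) : d.degree = d 0 + d 1 := by
  simp [Finsupp.degree_eq_sum, Fin.sum_univ_two]

theorem Finsupp.weight_fin_two (w : Fin 2 → ℕ) (d : Fin 2 →₀ ℕ) :
    weight w d = w 0 * d 0 + w 1 * d 1 := by
  simp [weight_apply, Finsupp.sum_fintype, Fin.sum_univ_two, mul_comm]

theorem Finsupp.exists_supporting_weight (S : Finset (Fin 2 →₀ ℕ)) {N : ℕ}
    (hN : ∀ d ∈ S, d 1 = 0 → N ≤ d 0) {d' : Fin 2 →₀ ℕ} (hd' : d' ∈ S)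
    (hlt : d' 0 + d' 1 < N) :
    ∃ w : Fin 2 → ℕ, 0 < w 0 ∧ w 0 < w 1 ∧ (∀ d ∈ S, w 0 * N ≤ weight w d) ∧
      ∃ d ∈ S, 0 < d 1 ∧ weight w d = w 0 * N := by
  classical
  have hd'1 : d' 1 ≠ 0 := fun h => by have := hN d' hd' h; omega
  -- the edge of the Newton polygon through `(N, 0)` ends at a maximiser `ds` of `(N - d 0) / d 1`
  obtain ⟨ds, hds, hmax⟩ := (S.filter (· 1 ≠ 0)).exists_max_image
    (fun d => ((N : ℚ) - d 0) / d 1) ⟨d', Finset.mem_filter.2 ⟨hd', hd'1⟩⟩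
  obtain ⟨hdsS, hds1⟩ := Finset.mem_filter.1 hds
  have hpos : ∀ d : Fin 2 →₀ ℕ, d 1 ≠ 0 → (0 : ℚ) < d 1 := fun d h => by
    exact_mod_cast Nat.pos_of_ne_zero h
  have hcross : ∀ d ∈ S, d 1 ≠ 0 → ((N : ℚ) - d 0) * ds 1 ≤ ((N : ℚ) - ds 0) * d 1 := by
    intro d hd h
    have := hmax d (Finset.mem_filter.2 ⟨hd, h⟩)
    rwa [div_le_div_iff₀ (hpos d h) (hpos ds hds1)] at this
  have hslope : (ds 1 : ℚ) < N - ds 0 := by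
    have h1 := hcross d' hd' hd'1
    have h2 : (d' 0 : ℚ) + d' 1 < N := by exact_mod_cast hlt
    nlinarith [hpos d' hd'1, hpos ds hds1]
  have hle : ds 0 ≤ N := by
    have : (ds 0 : ℚ) ≤ N := by linarith [(Nat.cast_nonneg (ds 1) : (0 : ℚ) ≤ _)]
    exact_mod_cast this
  refine ⟨![ds 1, N - ds 0], Nat.pos_of_ne_zero hds1, ?_, fun d hd => ?_, ds, hdsS,
    Nat.pos_of_ne_zero hds1, ?_⟩
  · simp only [Matrix.cons_val_zero, Matrix.cons_val_one]
    exact_mod_cast (by push_cast [hle]; exact hslope : ((ds 1 : ℕ) : ℚ) < ((N - ds 0 : ℕ) : ℚ))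
  · rw [weight_fin_two]
    simp only [Matrix.cons_val_zero, Matrix.cons_val_one]
    by_cases h : d 1 = 0
    · simpa [h] using Nat.mul_le_mul_left (ds 1) (hN d hd h)
    · have := hcross d hd h
      rw [← Nat.cast_le (α := ℚ)]
      push_cast [hle]
      linarith
  · rw [weight_fin_two]
    simp only [Matrix.cons_val_zero, Matrix.cons_val_one]
    zify [hle]
    ring

namespace MvPolynomial

theorem IsWeightedHomogeneous.eval_pow_mul {σ R : Type*} [Fintype σ] [CommSemiring R]
    {w : σ → ℕ} {P : MvPolynomial σ R} {n : ℕ} (hP : IsWeightedHomogeneous w P n) (t : R)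
    (z : σ → R) : eval (fun i => t ^ w i * z i) P = t ^ n * eval z P := by
  simp only [eval_eq', Finset.mul_sum]
  refine Finset.sum_congr rfl fun d hd => ?_
  have hwt : ∑ i, w i * d i = n := by
    rw [← hP (mem_support_iff.1 hd), weight_apply, Finsupp.sum_fintype _ _ (by simp)]
    simp [mul_comm]
  simp only [mul_pow, Finset.prod_mul_distrib, ← pow_mul, Finset.prod_pow_eq_pow_sum, hwt]
  ring

theorem X_dvd_of_forall_mem_support {σ R : Type*} [CommSemiring R] {p : MvPolynomial σ R} {i : σ}
    (h : ∀ d ∈ p.support, d i ≠ 0) : X i ∣ p := by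
  rw [p.as_sum]
  exact Finset.dvd_sum fun d hd => X_dvd_monomial.2 (Or.inr (h d hd))

theorem not_X_dvd_of_isRelPrime_map {σ R : Type*} [CommRing R] [IsDomain R]
    {p : MvPolynomial σ R} (f : R →+* R) (h : IsRelPrime p (map f p)) (i : σ) : ¬ X i ∣ p :=
  fun hX => X_prime.not_isUnit (h hX (by simpa using map_dvd (map f) hX))

theorem le_degree_of_homogeneousComponent_eq_zero {σ R : Type*} [CommSemiring R]
    {p : MvPolynomial σ R} {M : ℕ} (h : ∀ j < M, homogeneousComponent j p = 0)
    {d : σ →₀ ℕ} (hd : d ∈ p.support) : M ≤ d.degree := by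
  by_contra! hlt
  have := congrArg (coeff d) (h _ hlt)
  rw [coeff_homogeneousComponent, if_pos rfl, coeff_zero] at this
  exact mem_support_iff.1 hd this

theorem exists_mem_support_degree_eq {σ R : Type*} [CommSemiring R] {p : MvPolynomial σ R}
    {M : ℕ} (h : homogeneousComponent M p ≠ 0) : ∃ d ∈ p.support, d.degree = M := by
  by_contra! h'
  exact h (homogeneousComponent_eq_zero' M p h')

theorem eq_of_eval_eq_of_ne_zero {σ K : Type*} [Field K] [Infinite K] {P Q : MvPolynomial σ K}
    (i : σ) (h : ∀ z : σ → K, z i ≠ 0 → eval z P = eval z Q) : P = Q := by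
  refine mul_left_cancel₀ (X_ne_zero i) (funext fun z => ?_)
  by_cases hz : z i = 0
  · simp [hz]
  · simp [h z hz]

section Dehomogenize

variable {R : Type*} [CommSemiring R]

noncomputable def dehomogenize (P : MvPolynomial (Fin 2) R) : R[X] :=
  aeval ![1, Polynomial.X] P

theorem eval_dehomogenize (P : MvPolynomial (Fin 2) R) (x : R) :
    (dehomogenize P).eval x = eval ![1, x] P := by
  rw [dehomogenize]
  induction P using MvPolynomial.induction_on with
  | C => simp
  | add => simp_all
  | mul_X P i ih => fin_cases i <;> simp [ih]

theorem dehomogenize_eq_sum (P : MvPolynomial (Fin 2) R) :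
    dehomogenize P =
      ∑ d ∈ P.support, Polynomial.monomial (d 1) (coeff d P) := by
  conv_lhs => rw [dehomogenize, P.as_sum]
  rw [map_sum]
  refine Finset.sum_congr rfl fun d _ => ?_
  rw [aeval_monomial, Finsupp.prod_fintype _ _ (by simp), Fin.prod_univ_two]
  simp [Polynomial.C_mul_X_pow_eq_monomial]

theorem coeff_dehomogenize {w : Fin 2 → ℕ} {P : MvPolynomial (Fin 2) R} {n : ℕ}
    (hP : IsWeightedHomogeneous w P n) (hw : 0 < w 0) {d : Fin 2 →₀ ℕ} (hd : weight w d = n) :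
    (dehomogenize P).coeff (d 1) = coeff d P := by
  classical
  rw [dehomogenize_eq_sum, Polynomial.finsetSum_coeff, Finset.sum_eq_single d]
  · simp
  · intro d' hd' hne
    rw [Polynomial.coeff_monomial, if_neg]
    intro h1
    have h := hP (mem_support_iff.1 hd')
    rw [← hd, weight_fin_two, weight_fin_two, h1] at h
    exact hne (Finsupp.ext fun i => by
      fin_cases i
      · exact Nat.eq_of_mul_eq_mul_left hw (by simpa using h)
      · exact h1)
  · intro hd'
    simp [notMem_support_iff.1 hd']

theorem natDegree_dehomogenize_le {P : MvPolynomial (Fin 2) R} {M : ℕ} (hP : P.IsHomogeneous M) :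
    (dehomogenize P).natDegree ≤ M := by
  rw [dehomogenize_eq_sum]
  refine Polynomial.natDegree_sum_le_of_forall_le _ _ fun d hd => ?_
  refine (Polynomial.natDegree_monomial_le _).trans ?_
  rw [← hP (mem_support_iff.1 hd)]
  exact (le_degree 1 d).trans_eq (by rw [degree_eq_weight_one]; rfl)

end Dehomogenize

theorem IsHomogeneous.eval_eq_pow_mul_eval_dehomogenize {K : Type*} [Field K]
    {P : MvPolynomial (Fin 2) K} {M : ℕ} (hP : P.IsHomogeneous M) {z : Fin 2 → K} (hz : z 0 ≠ 0) :
    eval z P = z 0 ^ M * (dehomogenize P).eval (z 1 / z 0) := by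
  rw [eval_dehomogenize, ← IsWeightedHomogeneous.eval_pow_mul hP]
  congr
  funext i
  fin_cases i <;> simp [mul_div_cancel₀ _ hz]

theorem IsHomogeneous.exists_eq_C_mul_prod {P : MvPolynomial (Fin 2) ℂ} {M : ℕ}
    (hP : P.IsHomogeneous M) (h1 : coeff (single 1 M) P ≠ 0)
    (hroots : ∀ x ∈ (dehomogenize P).roots, x.re < 0 ∧ x.im = 0) :
    ∃ c : ℂ, c ≠ 0 ∧ ∃ a : Fin M → ℝ, (∀ j, 0 < a j) ∧
      P = C c * ∏ j, (X 1 + C ((a j : ℝ) : ℂ) * X 0) := by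
  set e := dehomogenize P
  have hM : e.coeff M ≠ 0 := by
    simpa using
      (coeff_dehomogenize hP one_pos (d := single 1 M) (by simp [weight_fin_two])).trans_ne h1
  have hdeg : e.natDegree = M :=
    le_antisymm (natDegree_dehomogenize_le hP) (Polynomial.le_natDegree_of_ne_zero hM)
  obtain ⟨a, ha, he⟩ := e.exists_eq_C_mul_prod_X_add_C hdeg hroots
  set c := e.leadingCoeff
  refine ⟨c, Polynomial.leadingCoeff_ne_zero.2 fun h => hM (by simp [h]), a, ha,
    eq_of_eval_eq_of_ne_zero 0 fun z hz => ?_⟩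
  rw [hP.eval_eq_pow_mul_eval_dehomogenize hz]
  change z 0 ^ M * e.eval _ = _
  rw [he]
  simp only [Polynomial.eval_mul, Polynomial.eval_C, Polynomial.eval_prod, Polynomial.eval_add,
    Polynomial.eval_X, map_mul, map_prod, map_add, eval_C, eval_X]
  rw [show z 0 ^ M = ∏ _j : Fin M, z 0 by simp, mul_left_comm, ← Finset.prod_mul_distrib]
  congr 1
  refine Finset.prod_congr rfl fun j _ => ?_
  field_simp

def IsStable {σ : Type*} (p : MvPolynomial σ ℂ) : Prop :=
  ∀ z : σ → ℂ, (∀ i, 0 < (z i).im) → eval z p ≠ 0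

theorem IsStable.rename {σ τ : Type*} {p : MvPolynomial σ ℂ} (hp : p.IsStable) (f : σ → τ) :
    (rename f p).IsStable := fun z hz => by
  rw [eval_rename]
  exact hp _ fun i => hz (f i)

section Stable

variable {p : MvPolynomial (Fin 2) ℂ} {w : Fin 2 → ℕ} {n : ℕ}

/-- `x ↦ t⁻ⁿ p (t ^ w 0 * u, t ^ w 1 * x)`, written so that it stays polynomial at `t = 0`, where
it becomes `x ↦ P (u, x)` for the weight-`n` part `P` of `p`. This needs every monomial of `p` to
have weight at least `n`; otherwise the truncated subtraction in the exponent is wrong. -/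
noncomputable def rescaledSlice (p : MvPolynomial (Fin 2) ℂ) (w : Fin 2 → ℕ) (n : ℕ) (u t : ℂ) :
    ℂ[X] :=
  ∑ d ∈ p.support, Polynomial.C (coeff d p * t ^ (weight w d - n) * u ^ d 0) * Polynomial.X ^ d 1

theorem pow_mul_eval_rescaledSlice (hn : ∀ d ∈ p.support, n ≤ weight w d) (u t x : ℂ) :
    t ^ n * (rescaledSlice p w n u t).eval x = eval ![t ^ w 0 * u, t ^ w 1 * x] p := by
  simp only [rescaledSlice, Polynomial.eval_finsetSum, Polynomial.eval_mul, Polynomial.eval_C,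
    Polynomial.eval_pow, Polynomial.eval_X, Finset.mul_sum, eval_eq', Fin.prod_univ_two,
    Matrix.cons_val_zero, Matrix.cons_val_one]
  refine Finset.sum_congr rfl fun d hd => ?_
  have ht : t ^ n * t ^ (weight w d - n) = t ^ (w 0 * d 0) * t ^ (w 1 * d 1) := by
    rw [← pow_add, ← pow_add, Nat.add_sub_cancel' (hn d hd), weight_fin_two]
  rw [mul_pow, mul_pow, ← pow_mul, ← pow_mul]
  linear_combination (coeff d p * u ^ d 0 * x ^ d 1) * ht

theorem eval_rescaledSlice_zero (hn : ∀ d ∈ p.support, n ≤ weight w d) (u x : ℂ) :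
    (rescaledSlice p w n u 0).eval x = eval ![u, x] (weightedHomogeneousComponent w n p) := by
  classical
  rw [weightedHomogeneousComponent_apply, map_sum, Finset.sum_filter, rescaledSlice,
    Polynomial.eval_finsetSum]
  refine Finset.sum_congr rfl fun d hd => ?_
  rw [eval_monomial, Finsupp.prod_fintype _ _ (by simp), Fin.prod_univ_two]
  by_cases h : weight w d = n
  · simp [h, mul_assoc]
  · have hpos : 0 < weight w d - n := Nat.sub_pos_of_lt ((hn d hd).lt_of_ne' h)
    simp [h, zero_pow hpos.ne']

theorem continuous_eval_rescaledSlice (u x : ℂ) :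
    Continuous fun t => (rescaledSlice p w n u t).eval x := by
  simp only [rescaledSlice, Polynomial.eval_finsetSum, Polynomial.eval_mul, Polynomial.eval_C,
    Polynomial.eval_pow, Polynomial.eval_X]
  fun_prop

theorem natDegree_rescaledSlice_le (u t : ℂ) :
    (rescaledSlice p w n u t).natDegree ≤ p.totalDegree :=
  Polynomial.natDegree_sum_le_of_forall_le _ _ fun d hd =>
    (Polynomial.natDegree_C_mul_X_pow_le _ _).trans <|
      (le_degree 1 d).trans (le_totalDegree hd)

theorem IsStable.eval_weightedHomogeneousComponent_eq_zero (hp : p.IsStable)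
    (hn : ∀ d ∈ p.support, n ≤ weight w d) {u v : ℂ} (hu : 0 < u.im) (hv : 0 < v.im)
    (h : eval ![u, v] (weightedHomogeneousComponent w n p) = 0) (x : ℂ) :
    eval ![u, x] (weightedHomogeneousComponent w n p) = 0 := by
  refine Polynomial.limit_eq_zero_of_roots_far (l := 𝓝[>] (0 : ℝ))
    (G := fun t : ℝ => rescaledSlice p w n u t) (fun _ => natDegree_rescaledSlice_le _ _)
    (F := fun y => eval ![u, y] (weightedHomogeneousComponent w n p)) (fun y => ?_) hv ?_ h x
  · rw [← eval_rescaledSlice_zero hn]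
    exact (((continuous_eval_rescaledSlice u y).comp Complex.continuous_ofReal).tendsto' 0 _
      (by simp)).mono_left nhdsWithin_le_nhds
  · filter_upwards [self_mem_nhdsWithin] with t (ht : 0 < t) y hy
    have hzero : eval ![(t : ℂ) ^ w 0 * u, (t : ℂ) ^ w 1 * y] p = 0 := by
      rw [← pow_mul_eval_rescaledSlice hn, (Polynomial.mem_roots'.1 hy).2, mul_zero]
    have hy : y.im ≤ 0 := by
      by_contra! hy
      refine hp _ (fun i => ?_) hzero
      fin_cases i <;> simp [← Complex.ofReal_pow] <;> positivity
    calc v.im ≤ (v - y).im := by simp; linarith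
      _ ≤ ‖v - y‖ := Complex.im_le_norm _

theorem IsStable.arg_eq_pi_of_isRoot (hp : p.IsStable) (hw0 : 0 < w 0) (hw : w 0 ≤ w 1)
    (hn : ∀ d ∈ p.support, n ≤ weight w d)
    (he : dehomogenize (weightedHomogeneousComponent w n p) ≠ 0)
    {x : ℂ} (hx : x ≠ 0) (hroot : (dehomogenize (weightedHomogeneousComponent w n p)).IsRoot x) :
    w 0 = w 1 ∧ x.arg = Real.pi := by
  set P := weightedHomogeneousComponent w n p
  have hscale : ∀ c y : ℂ, eval ![c ^ w 0, c ^ w 1 * y] P = c ^ n * (dehomogenize P).eval y := by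
    intro c y
    rw [eval_dehomogenize, ← (weightedHomogeneousComponent_isWeightedHomogeneous n p).eval_pow_mul]
    congr
    funext i
    fin_cases i <;> simp
  by_contra hne
  have hs : 1 ≤ (w 1 : ℝ) / w 0 := by
    rw [one_le_div (by positivity)]
    exact_mod_cast hw
  obtain ⟨θ, ⟨hθ0, hθπ⟩, hsin⟩ := Real.exists_sin_mul_add_pos hs (Complex.neg_pi_lt_arg x)
    (Complex.arg_le_pi x) fun ⟨h1, h2⟩ => hne ⟨by
      rw [div_eq_one_iff_eq (by positivity)] at h1
      exact_mod_cast h1.symm, h2⟩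
  set c := Complex.exp (↑(θ / w 0) * Complex.I)
  have hc : ∀ k : ℕ, c ^ k = Complex.exp (↑(k / w 0 * θ : ℝ) * Complex.I) := fun k => by
    rw [← Complex.exp_nat_mul]
    congr 1
    push_cast
    ring
  have hu : 0 < (c ^ w 0).im := by
    rw [hc, div_self (by positivity), one_mul, Complex.exp_ofReal_mul_I_im]
    exact Real.sin_pos_of_pos_of_lt_pi hθ0 hθπ
  have hv : 0 < (c ^ w 1 * x).im := by
    rw [hc, Complex.im_exp_mul_I_mul]
    exact mul_pos (norm_pos_iff.2 hx) hsin
  have hvanish := hp.eval_weightedHomogeneousComponent_eq_zero hn hu hv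
    (by rw [hscale, hroot.eq_zero, mul_zero])
  refine he (Polynomial.funext fun y => ?_)
  have hy := hvanish (c ^ w 1 * y)
  rw [hscale] at hy
  simpa [c, Complex.exp_ne_zero] using hy

end Stable

variable {p : MvPolynomial (Fin 2) ℂ} {M : ℕ}

theorem IsStable.single_zero_mem_support (hp : p.IsStable)
    (hlow : ∀ d ∈ p.support, M ≤ d.degree) (hM : ∃ d ∈ p.support, d.degree = M)
    (hX : ¬ X 1 ∣ p) : single 0 M ∈ p.support := by
  classical
  obtain ⟨d, hd, hd1⟩ : ∃ d ∈ p.support, d 1 = 0 := by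
    by_contra! h
    exact hX (X_dvd_of_forall_mem_support h)
  obtain ⟨dN, hdN, hmin⟩ :=
    (p.support.filter (· 1 = 0)).exists_min_image (· 0) ⟨d, Finset.mem_filter.2 ⟨hd, hd1⟩⟩
  obtain ⟨hdNp, hdN1⟩ := Finset.mem_filter.1 hdN
  have hdeg : dN.degree = dN 0 := by rw [degree_fin_two, hdN1, add_zero]
  rcases (hlow dN hdNp).lt_or_eq with hlt | heq
  · exfalso
    obtain ⟨d', hd', hd'M⟩ := hM
    obtain ⟨w, hw0, hw01, hwS, ds, hds, hds1, hdsw⟩ := exists_supporting_weight p.support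
      (fun d hd h1 => hmin d (Finset.mem_filter.2 ⟨hd, h1⟩)) hd'
      (by rw [← degree_fin_two, hd'M, ← hdeg]; exact hlt)
    set e := dehomogenize (weightedHomogeneousComponent w (w 0 * dN 0) p)
    have hcoeff : ∀ d ∈ p.support, weight w d = w 0 * dN 0 → e.coeff (d 1) ≠ 0 := by
      intro d hd hdw
      rw [coeff_dehomogenize (weightedHomogeneousComponent_isWeightedHomogeneous _ p) hw0 hdw,
        coeff_weightedHomogeneousComponent, if_pos hdw]
      exact mem_support_iff.1 hd
    have h0 := hcoeff dN hdNp (by rw [weight_fin_two, hdN1]; ring)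
    rw [hdN1] at h0
    obtain ⟨x, hx0, hx⟩ := Polynomial.exists_isRoot_ne_zero h0 (hcoeff ds hds hdsw) hds1
    have hne : e ≠ 0 := fun he => by simp [he] at h0
    exact hw01.ne (hp.arg_eq_pi_of_isRoot hw0 hw01.le hwS hne hx0 hx).1
  · convert hdNp
    ext i
    fin_cases i
    · simp [heq, hdeg]
    · simp [hdN1]

theorem IsStable.single_one_mem_support (hp : p.IsStable)
    (hlow : ∀ d ∈ p.support, M ≤ d.degree) (hM : ∃ d ∈ p.support, d.degree = M)
    (hX : ¬ X 0 ∣ p) : single 1 M ∈ p.support := by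
  classical
  set σ := Equiv.swap (0 : Fin 2) 1
  have hsupp : (MvPolynomial.rename σ p).support = p.support.image (mapDomain σ) :=
    support_rename_of_injective σ.injective
  have key := (hp.rename σ).single_zero_mem_support (M := M) ?_ ?_ ?_
  · rwa [mem_support_iff, show single 0 M = mapDomain σ (single 1 M) by simp [σ],
      coeff_rename_mapDomain _ σ.injective, ← mem_support_iff] at key
  · intro d hd
    rw [hsupp] at hd
    obtain ⟨d', hd', rfl⟩ := Finset.mem_image.1 hd
    rw [degree_mapDomain]
    exact hlow d' hd'
  · obtain ⟨d, hd, hdM⟩ := hM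
    exact ⟨mapDomain σ d, hsupp ▸ Finset.mem_image_of_mem _ hd, by rw [degree_mapDomain, hdM]⟩
  · intro h
    apply hX
    have hσσ : MvPolynomial.rename σ (MvPolynomial.rename σ p) = p := by
      rw [rename_rename, show ⇑σ ∘ ⇑σ = id from _root_.funext (Equiv.swap_apply_self 0 1),
        rename_id]
      rfl
    simpa [hσσ, σ] using map_dvd (MvPolynomial.rename σ) h

theorem IsStable.roots_dehomogenize_homogeneousComponent (hp : p.IsStable)
    (hlow : ∀ d ∈ p.support, M ≤ d.degree) (h0 : single 0 M ∈ p.support) :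
    ∀ x ∈ (dehomogenize (homogeneousComponent M p)).roots, x.re < 0 ∧ x.im = 0 := by
  intro x hx
  obtain ⟨hne, hroot⟩ := Polynomial.mem_roots'.1 hx
  have hcoeff0 : (dehomogenize (homogeneousComponent M p)).coeff 0 ≠ 0 := by
    have := coeff_dehomogenize (homogeneousComponent_isHomogeneous M p) one_pos (d := single 0 M)
      (by simp [weight_fin_two])
    rw [show (single 0 M : Fin 2 →₀ ℕ) 1 = 0 by simp] at this
    rw [this, coeff_homogeneousComponent, if_pos (by simp)]
    exact mem_support_iff.1 h0
  have hx0 : x ≠ 0 := by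
    rintro rfl
    exact hcoeff0 (by rwa [Polynomial.coeff_zero_eq_eval_zero])
  have hlow' : ∀ d ∈ p.support, M ≤ weight 1 d := fun d hd =>
    (hlow d hd).trans_eq (by rw [degree_eq_weight_one]; rfl)
  exact Complex.arg_eq_pi_iff.1 (hp.arg_eq_pi_of_isRoot one_pos le_rfl hlow' hne hx0 hroot).2

end MvPolynomial

theorem pure_stable_lowest_term_factorization_general (p : MvPolynomial (Fin 2) ℂ) (M : ℕ)
    (hstable : ∀ z : Fin 2 → ℂ, (∀ i, 0 < (z i).im) → MvPolynomial.eval z p ≠ 0)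
    (hpure : ∀ r : MvPolynomial (Fin 2) ℂ,
      r ∣ p → r ∣ MvPolynomial.map (starRingEnd ℂ) p → IsUnit r)
    (hM : MvPolynomial.homogeneousComponent M p ≠ 0)
    (hMmin : ∀ j < M, MvPolynomial.homogeneousComponent j p = 0) :
    ∃ c : ℂ, c ≠ 0 ∧ ∃ a : Fin M → ℝ, (∀ j, 0 < a j) ∧
      MvPolynomial.homogeneousComponent M p =
        MvPolynomial.C c *
          ∏ j, (MvPolynomial.X 1 + MvPolynomial.C ((a j : ℝ) : ℂ) * MvPolynomial.X 0) := by
  have hlow : ∀ d ∈ p.support, M ≤ d.degree := fun d hd =>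
    MvPolynomial.le_degree_of_homogeneousComponent_eq_zero hMmin hd
  have hMd := MvPolynomial.exists_mem_support_degree_eq hM
  have hX := MvPolynomial.not_X_dvd_of_isRelPrime_map (starRingEnd ℂ) fun _ => hpure _
  have h0 := MvPolynomial.IsStable.single_zero_mem_support hstable hlow hMd (hX 1)
  have h1 := MvPolynomial.IsStable.single_one_mem_support hstable hlow hMd (hX 0)
  refine (MvPolynomial.homogeneousComponent_isHomogeneous M p).exists_eq_C_mul_prod ?_
    (MvPolynomial.IsStable.roots_dehomogenize_homogeneousComponent hstable hlow h0)
  rw [MvPolynomial.coeff_homogeneousComponent, if_pos (by simp)]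
  exact MvPolynomial.mem_support_iff.1 h1

/-- **Corollary (lowest homogeneous term of a pure stable polynomial in two
variables).**  Let `p ∈ ℂ[z₁,z₂]` be pure stable with `p(0,0) = 0` and order of
vanishing `M` at `(0,0)`.  Then the lowest order homogeneous term has the form
`P_M(z₁,z₂) = c ∏_{j=1}^M (z₂ + a_j z₁)` with `c ≠ 0` and all `a_j > 0` real.
In particular `P_M` has no factors of `z₁` or `z₂`. -/
theorem pure_stable_lowest_term_factorization (p : MvPolynomial (Fin 2) ℂ) (M : ℕ)
    (hstable : ∀ z : Fin 2 → ℂ, (∀ i, 0 < (z i).im) → MvPolynomial.eval z p ≠ 0)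
    (hpure : ∀ r : MvPolynomial (Fin 2) ℂ,
      r ∣ p → r ∣ MvPolynomial.map (starRingEnd ℂ) p → IsUnit r)
    (hp0 : MvPolynomial.eval (0 : Fin 2 → ℂ) p = 0)
    (hM : MvPolynomial.homogeneousComponent M p ≠ 0)
    (hMmin : ∀ j < M, MvPolynomial.homogeneousComponent j p = 0) :
    ∃ c : ℂ, c ≠ 0 ∧ ∃ a : Fin M → ℝ, (∀ j, 0 < a j) ∧
      MvPolynomial.homogeneousComponent M p =
        MvPolynomial.C c *
          ∏ j, (MvPolynomial.X 1 + MvPolynomial.C ((a j : ℝ) : ℂ) * MvPolynomial.X 0) :=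
  pure_stable_lowest_term_factorization_general p M hstable hpure hM hMmin
end

section
/- Let p, q ∈ ℂ[z₁,…,z_d] with p having no zeros in ℍ^d, p(0) = 0 with order of vanishing M at 0 and lowest homogeneous term P_M, and let Q_M denote the degree-M homogeneous part of q (possibly identically zero). If f = q/p is bounded on ℍ^d, then Q_M is a constant multiple of P_M. -/
/-!
Since `p` has no zeros on `ℍ^d`, boundedness of `q / p` reads `‖q‖ ≤ C‖p‖` there. As `ℍ^d` is
a cone, we may evaluate at `t • z` and let `t → 0⁺`: dividing by `t^M` turns the bound into
`‖Q_M‖ ≤ C‖P_M‖` on `ℍ^d`. Being homogeneous of the same degree, `Q_M` and `P_M` obey this bound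
also on `-ℍ^d`; hence on a complex line `a + s • v` with `a` real and `v` positive it holds for
all non-real `s`, by continuity for all `s`, and Liouville's theorem (applied after cancelling
the common roots) makes the two restrictions proportional. Comparing the lines through `a` in
direction `v` and through `v` in direction `a` shows that `Q_M / P_M` takes the same value at
any two points of the positive orthant, which is Zariski dense.
-/

open MvPolynomial ComplexOrder
open scoped Polynomial

namespace Polynomial

theorem norm_eval_le_of_dense {F G : ℂ[X]} {C : ℝ} {S : Set ℂ} (hS : Dense S)
    (h : ∀ s ∈ S, ‖F.eval s‖ ≤ C * ‖G.eval s‖) (s : ℂ) : ‖F.eval s‖ ≤ C * ‖G.eval s‖ :=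
  le_on_closure h (by fun_prop) (by fun_prop) (hS.closure_eq ▸ Set.mem_univ s)

theorem norm_eval_zero_le_of_forall_pos {F G : ℂ[X]} {C : ℝ}
    (h : ∀ t : ℝ, 0 < t → ‖F.eval (t : ℂ)‖ ≤ C * ‖G.eval (t : ℂ)‖) :
    ‖F.eval 0‖ ≤ C * ‖G.eval 0‖ := by
  have hcont : ∀ H : ℂ[X], Continuous fun t : ℝ => ‖H.eval (t : ℂ)‖ := fun H => by fun_prop
  have := le_on_closure (s := Set.Ioi 0) h (hcont F).continuousOn
    ((hcont G).const_mul C).continuousOn (x := 0) (by simp)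
  simpa using this

theorem norm_coeff_le_of_forall_pos {F G : ℂ[X]} {C : ℝ} {M : ℕ}
    (hG : ∀ j < M, G.coeff j = 0)
    (h : ∀ t : ℝ, 0 < t → ‖F.eval (t : ℂ)‖ ≤ C * ‖G.eval (t : ℂ)‖) :
    ‖F.coeff M‖ ≤ C * ‖G.coeff M‖ := by
  induction M generalizing F G with
  | zero => simpa [coeff_zero_eq_eval_zero] using norm_eval_zero_le_of_forall_pos h
  | succ M ih =>
    obtain ⟨G', rfl⟩ : X ∣ G := X_dvd_iff.2 (hG 0 M.succ_pos)
    obtain ⟨F', rfl⟩ : X ∣ F := by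
      simpa [X_dvd_iff, coeff_zero_eq_eval_zero] using norm_eval_zero_le_of_forall_pos h
    rw [coeff_X_mul, coeff_X_mul]
    refine ih (fun j hj => by simpa using hG (j + 1) (by omega)) fun t ht => ?_
    have := h t ht
    simp only [eval_mul, eval_X, norm_mul, Complex.norm_real, Real.norm_of_nonneg ht.le,
      mul_left_comm C] at this
    exact le_of_mul_le_mul_left this ht

theorem exists_eq_C_mul_of_norm_eval_le {F G : ℂ[X]} {C : ℝ}
    (h : ∀ s, ‖F.eval s‖ ≤ C * ‖G.eval s‖) : ∃ c, F = Polynomial.C c * G := by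
  induction hn : G.natDegree generalizing F G with
  | zero =>
    obtain ⟨g, rfl⟩ : ∃ g, G = Polynomial.C g := ⟨_, eq_C_of_natDegree_eq_zero hn⟩
    have hconst : ∀ s, F.eval s = F.eval 0 := fun s =>
      F.differentiable.apply_eq_apply_of_bounded
        (isBounded_iff_forall_norm_le.2 ⟨C * ‖g‖, by rintro _ ⟨s, rfl⟩; simpa using h s⟩) s 0
    have hF : F = Polynomial.C (F.eval 0) := Polynomial.funext fun s => by simpa using hconst s
    refine ⟨F.eval 0 / g, ?_⟩
    rcases eq_or_ne g 0 with rfl | hg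
    · rw [hF]; simpa using h 0
    · rw [← C_mul, div_mul_cancel₀ _ hg, ← hF]
  | succ n ih =>
    obtain ⟨r, hr⟩ := Complex.exists_root (natDegree_pos_iff_degree_pos (p := G) |>.1 (by omega))
    have hFr : F.IsRoot r := by
      have hGr : G.eval r = 0 := hr
      simpa [hGr] using h r
    rw [← mul_divByMonic_eq_iff_isRoot] at hr hFr
    set G' := G /ₘ (X - Polynomial.C r)
    set F' := F /ₘ (X - Polynomial.C r)
    have hG' : G'.natDegree = n := by
      rw [natDegree_divByMonic _ (monic_X_sub_C r), natDegree_X_sub_C, hn, Nat.add_sub_cancel]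
    have hbound : ∀ s ∈ ({r}ᶜ : Set ℂ), ‖F'.eval s‖ ≤ C * ‖G'.eval s‖ := by
      intro s hs
      have := h s
      rw [← hr, ← hFr] at this
      simp only [eval_mul, eval_sub, eval_X, eval_C, norm_mul, mul_left_comm C] at this
      exact le_of_mul_le_mul_left this (norm_pos_iff.2 (sub_ne_zero.2 hs))
    obtain ⟨c, hc⟩ := ih (norm_eval_le_of_dense (dense_compl_singleton r) hbound) hG'
    exact ⟨c, by rw [← hr, ← hFr, hc, mul_left_comm]⟩

end Polynomial

def upperHalfPlanePi (σ : Type*) : Set (σ → ℂ) := {z | ∀ i, 0 < (z i).im}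

theorem ofReal_smul_mem_upperHalfPlanePi {σ : Type*} {z : σ → ℂ} (hz : z ∈ upperHalfPlanePi σ)
    {t : ℝ} (ht : 0 < t) : (t : ℂ) • z ∈ upperHalfPlanePi σ := fun i => by
  simpa using mul_pos ht (hz i)

namespace MvPolynomial

section Restriction

variable {σ R : Type*}

theorem IsHomogeneous.eval_smul [CommSemiring R] {φ : MvPolynomial σ R} {n : ℕ}
    (hφ : φ.IsHomogeneous n) (c : R) (x : σ → R) :
    eval (c • x) φ = c ^ n * eval x φ := by
  simp only [eval_eq, Finset.mul_sum]
  refine Finset.sum_congr rfl fun m hm => ?_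
  simp only [Pi.smul_apply, smul_eq_mul, mul_pow, Finset.prod_mul_distrib,
    Finset.prod_pow_eq_pow_sum, ← hφ.degree_eq_sum_deg_support hm]
  ring

noncomputable def restrictLine [CommSemiring R] (a v : σ → R) : MvPolynomial σ R →ₐ[R] R[X] :=
  aeval fun i => Polynomial.C (a i) + Polynomial.C (v i) * Polynomial.X

theorem eval_restrictLine [CommSemiring R] (a v : σ → R) (p : MvPolynomial σ R) (s : R) :
    (restrictLine a v p).eval s = eval (a + s • v) p := by
  rw [restrictLine, ← Polynomial.coe_aeval_eq_eval, ← AlgHom.comp_apply, comp_aeval,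
    ← aeval_eq_eval]
  congr; funext i
  simp only [map_add, map_mul, Polynomial.aeval_C, Polynomial.aeval_X, Pi.add_apply,
    Pi.smul_apply, smul_eq_mul, Algebra.algebraMap_self, RingHom.id_apply, mul_comm]

theorem coeff_restrictLine_zero [CommRing R] [IsDomain R] [Infinite R] (z : σ → R)
    (p : MvPolynomial σ R) (j : ℕ) :
    (restrictLine 0 z p).coeff j = eval z (homogeneousComponent j p) := by
  have hray : ∀ n, restrictLine 0 z (homogeneousComponent n p)
      = Polynomial.C (eval z (homogeneousComponent n p)) * Polynomial.X ^ n := fun n =>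
    Polynomial.funext fun s => by
      rw [eval_restrictLine, zero_add, (homogeneousComponent_isHomogeneous n p).eval_smul,
        Polynomial.eval_mul, Polynomial.eval_C, Polynomial.eval_pow, Polynomial.eval_X, mul_comm]
  conv_lhs => rw [← sum_homogeneousComponent p]
  simp only [map_sum, hray, Polynomial.finsetSum_coeff, Polynomial.coeff_C_mul_X_pow,
    Finset.sum_ite_eq, Finset.mem_range]
  split_ifs with hj
  · rfl
  · rw [homogeneousComponent_eq_zero _ _ (by omega), map_zero]

end Restriction

variable {σ : Type*}

theorem norm_eval_homogeneousComponent_le {p q : MvPolynomial σ ℂ} {z : σ → ℂ} {C : ℝ} {M : ℕ}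
    (hp : ∀ j < M, homogeneousComponent j p = 0)
    (h : ∀ t : ℝ, 0 < t → ‖eval ((t : ℂ) • z) q‖ ≤ C * ‖eval ((t : ℂ) • z) p‖) :
    ‖eval z (homogeneousComponent M q)‖ ≤ C * ‖eval z (homogeneousComponent M p)‖ := by
  simp only [← coeff_restrictLine_zero]
  refine Polynomial.norm_coeff_le_of_forall_pos (fun j hj => ?_) fun t ht => ?_
  · rw [coeff_restrictLine_zero, hp j hj, map_zero]
  · simpa [eval_restrictLine] using h t ht

theorem IsHomogeneous.norm_eval_neg {φ : MvPolynomial σ ℂ} {n : ℕ} (hφ : φ.IsHomogeneous n)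
    (z : σ → ℂ) : ‖eval (-z) φ‖ = ‖eval z φ‖ := by
  rw [← neg_one_smul ℂ z, hφ.eval_smul]
  simp

section Homogeneous

variable {P Q : MvPolynomial σ ℂ} {M : ℕ} {C : ℝ}

theorem IsHomogeneous.exists_restrictLine_eq (hP : P.IsHomogeneous M) (hQ : Q.IsHomogeneous M)
    (hb : ∀ z ∈ upperHalfPlanePi σ, ‖eval z Q‖ ≤ C * ‖eval z P‖) {a v : σ → ℂ}
    (ha : ∀ i, (a i).im = 0) (hv : ∀ i, 0 < v i) :
    ∃ c, restrictLine a v Q = Polynomial.C c * restrictLine a v P := by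
  refine Polynomial.exists_eq_C_mul_of_norm_eval_le (C := C)
    (Polynomial.norm_eval_le_of_dense
      ((dense_compl_singleton 0).preimage Complex.isOpenMap_im) fun s hs => ?_)
  have him : ∀ i, ((a + s • v) i).im = s.im * (v i).re := fun i => by
    simp [ha i, ← (Complex.pos_iff.1 (hv i)).2]
  simp only [eval_restrictLine]
  rcases (show s.im ≠ 0 from hs).lt_or_gt with hneg | hpos
  · rw [← hQ.norm_eval_neg, ← hP.norm_eval_neg]
    refine hb _ fun i => ?_
    rw [Pi.neg_apply, Complex.neg_im, him, neg_pos]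
    exact mul_neg_of_neg_of_pos hneg (Complex.pos_iff.1 (hv i)).1
  · exact hb _ fun i => by rw [him]; exact mul_pos hpos (Complex.pos_iff.1 (hv i)).1

theorem IsHomogeneous.exists_eval_eq_mul_eval (hP : P.IsHomogeneous M) (hQ : Q.IsHomogeneous M)
    (hb : ∀ z ∈ upperHalfPlanePi σ, ‖eval z Q‖ ≤ C * ‖eval z P‖) {a v : σ → ℂ}
    (ha : ∀ i, (a i).im = 0) (hv : ∀ i, 0 < v i) :
    ∃ c, eval a Q = c * eval a P ∧ eval v Q = c * eval v P := by
  obtain ⟨c, hc⟩ := hP.exists_restrictLine_eq hQ hb ha hv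
  have hline : ∀ s : ℂ, eval (a + s • v) Q = c * eval (a + s • v) P := fun s => by
    simpa [eval_restrictLine] using congrArg (Polynomial.eval s) hc
  refine ⟨c, by simpa using hline 0, ?_⟩
  -- away from `t = 0` the line `t ↦ t • a + v` is a rescaling of the line above
  have hcont : ∀ R : MvPolynomial σ ℂ, Continuous fun t : ℂ => eval (t • a + v) R :=
    fun R => (continuous_eval R).comp (by fun_prop)
  have hrev := Continuous.ext_on (dense_compl_singleton 0) (hcont Q)
    ((hcont P).const_mul c) fun t (ht : t ≠ 0) => by
      have hta : t • a + v = t • (a + t⁻¹ • v) := by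
        rw [smul_add, smul_smul, mul_inv_cancel₀ ht, one_smul]
      simp only [hta, hQ.eval_smul, hP.eval_smul, hline]
      ring
  simpa using congrFun hrev 0

theorem IsHomogeneous.exists_eq_smul_of_norm_eval_le (hP : P.IsHomogeneous M)
    (hQ : Q.IsHomogeneous M) (hb : ∀ z ∈ upperHalfPlanePi σ, ‖eval z Q‖ ≤ C * ‖eval z P‖) :
    ∃ b : ℂ, Q = b • P := by
  have hinf : ∀ _ : σ, (Set.Ioi (0 : ℂ)).Infinite := fun _ => Set.Ioi_infinite 0
  have hprop : ∀ a ∈ Set.univ.pi fun _ => Set.Ioi (0 : ℂ), ∀ v ∈ Set.univ.pi fun _ => Set.Ioi 0,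
      ∃ c, eval a Q = c * eval a P ∧ eval v Q = c * eval v P := fun a ha v hv =>
    hP.exists_eval_eq_mul_eval hQ hb (fun i => (Complex.pos_iff.1 (ha i trivial)).2.symm)
      fun i => hv i trivial
  by_cases hP0 : ∃ v ∈ Set.univ.pi fun _ => Set.Ioi (0 : ℂ), eval v P ≠ 0
  · obtain ⟨v, hv, hPv⟩ := hP0
    refine ⟨eval v Q / eval v P, funext_set _ hinf fun a ha => ?_⟩
    obtain ⟨c, hca, hcv⟩ := hprop a ha v hv
    rw [smul_eval, hca, hcv, mul_div_cancel_right₀ _ hPv]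
  · simp only [not_exists, not_and, not_not] at hP0
    refine ⟨0, funext_set _ hinf fun a ha => ?_⟩
    obtain ⟨c, hca, -⟩ := hprop a ha a ha
    rw [hca, hP0 a ha, zero_smul, map_zero, mul_zero]

end Homogeneous

end MvPolynomial

theorem bounded_ratio_lowest_term_multiple_general (d : ℕ) (p q : MvPolynomial (Fin d) ℂ)
    (M : ℕ)
    (hstable : ∀ z : Fin d → ℂ, (∀ i, 0 < (z i).im) → MvPolynomial.eval z p ≠ 0)
    (hMmin : ∀ j < M, MvPolynomial.homogeneousComponent j p = 0)
    (hbd : ∃ C : ℝ, ∀ z : Fin d → ℂ, (∀ i, 0 < (z i).im) →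
      ‖MvPolynomial.eval z q / MvPolynomial.eval z p‖ ≤ C) :
    ∃ b : ℂ, MvPolynomial.homogeneousComponent M q
      = b • MvPolynomial.homogeneousComponent M p := by
  obtain ⟨C, hC⟩ := hbd
  have hbound : ∀ z ∈ upperHalfPlanePi (Fin d), ‖eval z q‖ ≤ C * ‖eval z p‖ := fun z hz => by
    have := hC z hz
    rw [norm_div, div_le_iff₀ (norm_pos_iff.2 (hstable z hz))] at this
    linarith
  exact (homogeneousComponent_isHomogeneous M p).exists_eq_smul_of_norm_eval_le (C := C)
    (homogeneousComponent_isHomogeneous M q) fun z hz => norm_eval_homogeneousComponent_le hMmin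
      fun t ht => hbound _ (ofReal_smul_mem_upperHalfPlanePi hz ht)

/-- **Lemma (the lowest numerator term is a multiple of the lowest denominator
term).**  Let `p, q ∈ ℂ[z₁,…,z_d]` with `p` zero-free on `ℍ^d`, `p(0) = 0` with
order of vanishing `M` and lowest homogeneous term `P_M`, and let `Q_M` be the
degree-`M` homogeneous part of `q`.  If `f = q/p` is bounded on `ℍ^d`, then
`Q_M = b ⋅ P_M` for some constant `b ∈ ℂ`. -/
theorem bounded_ratio_lowest_term_multiple (d : ℕ) (p q : MvPolynomial (Fin d) ℂ)
    (M : ℕ)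
    (hstable : ∀ z : Fin d → ℂ, (∀ i, 0 < (z i).im) → MvPolynomial.eval z p ≠ 0)
    (hp0 : MvPolynomial.eval (0 : Fin d → ℂ) p = 0)
    (hM : MvPolynomial.homogeneousComponent M p ≠ 0)
    (hMmin : ∀ j < M, MvPolynomial.homogeneousComponent j p = 0)
    (hbd : ∃ C : ℝ, ∀ z : Fin d → ℂ, (∀ i, 0 < (z i).im) →
      ‖MvPolynomial.eval z q / MvPolynomial.eval z p‖ ≤ C) :
    ∃ b : ℂ, MvPolynomial.homogeneousComponent M q
      = b • MvPolynomial.homogeneousComponent M p :=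
  bounded_ratio_lowest_term_multiple_general d p q M hstable hMmin hbd
end
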